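/- arXiv:0902.3592 — 3 statements merged into one kernel-verified Lean document; each statement's English description precedes it below -/
import Mathlib

section
/- Let D be an integral domain and Δ a nonempty family of prime ideals of D such that D = ⋂_{P∈Δ} D_P. If D_P is a v-domain for each P ∈ Δ, then D is a v-domain. In particular, if D_M is a v-domain for every maximal ideal M of D, then D is a v-domain. -/
/-! For a finitely generated `F`, inversion commutes with extension to a localization:
`(F D_P)⁻¹ = F⁻¹ D_P`, since an element of `(F D_P)⁻¹` lands in `F⁻¹` after clearing the
denominators of its products with the finitely many generators of `F`. Hence if `x F F⁻¹ ⊆ D`,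
then `x (F D_P) (F D_P)⁻¹ ⊆ D_P`, and `x ∈ D_P` because `D_P` is a `v`-domain. Intersecting
over `P` gives `(F F⁻¹)⁻¹ = D`, which is equivalent to `(F F⁻¹)^v = D`. -/

open FractionalIdeal

variable {D K : Type*} [CommRing D] [IsDomain D] [Field K] [Algebra D K] [IsFractionRing D K]

/-- The `v`-operation: `A ↦ (A⁻¹)⁻¹`, where `A⁻¹ = (D : A) = 1 / A`. -/
noncomputable def vop (A : FractionalIdeal (nonZeroDivisors D) K) :
    FractionalIdeal (nonZeroDivisors D) K := 1 / (1 / A)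

/-- `A` is `v`-invertible if `(A·A⁻¹)^v = D`. -/
noncomputable def IsVInvertible (A : FractionalIdeal (nonZeroDivisors D) K) : Prop :=
  vop (A * (1 / A)) = 1

/-- `R` is a `v`-domain: every nonzero finitely generated fractional ideal `F` satisfies
`(F·F⁻¹)^v = R`. -/
noncomputable def IsVDomain (R K : Type*) [CommRing R] [IsDomain R] [Field K] [Algebra R K]
    [IsFractionRing R K] : Prop :=
  ∀ F : FractionalIdeal (nonZeroDivisors R) K, F ≠ 0 → (F : Submodule R K).FG →
    1 / (1 / (F * (1 / F))) = 1

open scoped nonZeroDivisors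

namespace FractionalIdeal

variable {R L : Type*} [CommRing R] [Field L] [Algebra R L]

theorem mul_ne_zero_of_ne_zero {A B : FractionalIdeal R⁰ L} (hA : A ≠ 0) (hB : B ≠ 0) :
    A * B ≠ 0 := by
  obtain ⟨a, haA, ha⟩ : ∃ a ∈ A, a ≠ 0 := by simpa [eq_zero_iff] using hA
  obtain ⟨b, hbB, hb⟩ : ∃ b ∈ B, b ≠ 0 := by simpa [eq_zero_iff] using hB
  exact fun h ↦ mul_ne_zero ha hb ((eq_zero_iff.mp h) _ (mul_mem_mul haA hbB))

variable [IsDomain R] [IsFractionRing R L]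

/-- A common denominator of `A` lies in `1 / A`. -/
theorem one_div_ne_zero_of_ne_zero {A : FractionalIdeal R⁰ L} (hA : A ≠ 0) : 1 / A ≠ 0 := by
  obtain ⟨a, ha, haA⟩ := A.isFractional
  have hmem : algebraMap R L a ∈ 1 / A := by
    rw [mem_div_iff_of_ne_zero hA]
    intro y hy
    obtain ⟨d, hd⟩ := haA y hy
    exact (mem_one_iff _).mpr ⟨d, by rw [hd, Algebra.smul_def]⟩
  intro h
  rw [h, mem_zero_iff] at hmem
  exact nonZeroDivisors.ne_zero ha ((IsFractionRing.injective R L).eq_iff.mp (by simpa using hmem))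

theorem le_one_div_one_div (A : FractionalIdeal R⁰ L) : A ≤ 1 / (1 / A) := by
  rcases eq_or_ne A 0 with rfl | hA
  · exact bot_le
  · exact (le_div_iff_mul_le (one_div_ne_zero_of_ne_zero hA)).mpr mul_one_div_le_one

theorem one_div_one_div_eq_one_iff {A : FractionalIdeal R⁰ L} (hA : A ≠ 0) (hA1 : A ≤ 1) :
    1 / (1 / A) = 1 ↔ 1 / A ≤ 1 := by
  refine ⟨fun h ↦ ?_, fun h ↦ ?_⟩
  · have := le_one_div_one_div (1 / A)
    rwa [h, FractionalIdeal.div_one] at this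
  · have h1 : 1 ≤ 1 / A := (le_div_iff_mul_le hA).mpr (by rwa [one_mul])
    rw [le_antisymm h h1, FractionalIdeal.div_one]

end FractionalIdeal

theorem isVDomain_iff {R L : Type*} [CommRing R] [IsDomain R] [Field L] [Algebra R L]
    [IsFractionRing R L] :
    IsVDomain R L ↔ ∀ F : FractionalIdeal R⁰ L, F ≠ 0 → (F : Submodule R L).FG →
      1 / (F * (1 / F)) ≤ 1 :=
  forall₂_congr fun _F hF ↦ imp_congr_right fun _ ↦ one_div_one_div_eq_one_iff
    (mul_ne_zero_of_ne_zero hF (one_div_ne_zero_of_ne_zero hF)) mul_one_div_le_one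

section Extension

variable {T : Type*} [CommRing T] [IsDomain T] [Algebra D T] [Module.IsTorsionFree D T]
  [Algebra T K] [IsFractionRing T K] [IsScalarTower D T K]

namespace FractionalIdeal

theorem coe_extendedHom_eq_span_of_isScalarTower (I : FractionalIdeal D⁰ K) :
    (extendedHom K T I : Submodule T K) = Submodule.span T (I : Set K) := by
  rw [extendedHom'_apply, coe_extended_eq_span]
  have hid : IsLocalization.map K (algebraMap D T)
      (nonZeroDivisors_le_comap_nonZeroDivisors_of_injective _
        (FaithfulSMul.algebraMap_injective D T)) = RingHom.id K :=
    IsLocalization.ringHom_ext D⁰ <| RingHom.ext fun a ↦ by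
      simp [← IsScalarTower.algebraMap_apply]
  rw [hid, RingHom.coe_id, Set.image_id]

theorem mem_extendedHom_of_mem {I : FractionalIdeal D⁰ K} {x : K} (hx : x ∈ I) :
    x ∈ extendedHom K T I := by
  rw [← mem_coe, coe_extendedHom_eq_span_of_isScalarTower]
  exact Submodule.subset_span hx

theorem fg_extendedHom {I : FractionalIdeal D⁰ K} (hI : (I : Submodule D K).FG) :
    (extendedHom K T I : Submodule T K).FG := by
  obtain ⟨s, hs⟩ := hI
  refine ⟨s, ?_⟩
  rw [coe_extendedHom_eq_span_of_isScalarTower, ← Submodule.span_span_of_tower D T, hs]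
  rfl

omit [IsScalarTower D T K] in
theorem extendedHom_one_div_le (I : FractionalIdeal D⁰ K) :
    extendedHom K T (1 / I) ≤ 1 / extendedHom K T I := by
  rcases eq_or_ne I 0 with rfl | hI
  · simp
  rw [le_div_iff_mul_le ((extendedHom_eq_zero_iff K T).not.mpr hI), ← map_mul]
  exact extended_le_one_of_le_one _ _ _ (by rw [mul_comm]; exact mul_one_div_le_one)

theorem one_div_extendedHom_le_of_fg (S : Submonoid D) [IsLocalization S T]
    {I : FractionalIdeal D⁰ K} (hI : (I : Submodule D K).FG) :
    1 / extendedHom K T I ≤ extendedHom K T (1 / I) := by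
  rcases eq_or_ne I 0 with rfl | hI0
  · simp
  obtain ⟨s, hs⟩ := hI
  have hsI : ∀ a ∈ s, a ∈ I := fun a ha ↦ by
    rw [← mem_coe, ← hs]
    exact Submodule.subset_span ha
  intro y hy
  rw [mem_div_iff_of_ne_zero ((extendedHom_eq_zero_iff K T).not.mpr hI0)] at hy
  have hyT : ∀ a : s, ∃ t : T, algebraMap T K t = y * a := fun a ↦
    (mem_one_iff _).mp (hy a (mem_extendedHom_of_mem (hsI a a.2)))
  choose t ht using hyT
  obtain ⟨u, hu⟩ := IsLocalization.exist_integer_multiples S Finset.univ t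
  have huy : algebraMap D K u * y ∈ 1 / I := by
    rw [mem_div_iff_of_ne_zero hI0]
    suffices (I : Submodule D K) ≤ (1 : Submodule D K).comap
        (LinearMap.mulLeft D (algebraMap D K u * y)) from fun z hz ↦ by
      rw [← mem_coe, coe_one]
      exact this hz
    rw [← hs, Submodule.span_le]
    intro a ha
    obtain ⟨d, hd⟩ := hu ⟨a, ha⟩ (Finset.mem_univ _)
    rw [SetLike.mem_coe, Submodule.mem_comap, Submodule.mem_one]
    refine ⟨d, ?_⟩
    rw [IsScalarTower.algebraMap_apply D T K d, hd, Algebra.smul_def, map_mul, ht,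
      ← IsScalarTower.algebraMap_apply, LinearMap.mulLeft_apply, mul_assoc]
  rw [← mem_coe, coe_extendedHom_eq_span_of_isScalarTower,
    ← Submodule.smul_mem_iff_of_isUnit _ (IsLocalization.map_units T u), algebraMap_smul,
    Algebra.smul_def]
  exact Submodule.subset_span huy

theorem extendedHom_one_div_mul_one_div_le_one (S : Submonoid D) [IsLocalization S T]
    (hT : IsVDomain T K) {F : FractionalIdeal D⁰ K} (hF : F ≠ 0)
    (hFG : (F : Submodule D K).FG) :
    extendedHom K T (1 / (F * (1 / F))) ≤ 1 := by
  set G := extendedHom K T F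
  have hG : G ≠ 0 := (extendedHom_eq_zero_iff K T).not.mpr hF
  have hinv : extendedHom K T (1 / F) = 1 / G :=
    le_antisymm (extendedHom_one_div_le F) (one_div_extendedHom_le_of_fg S hFG)
  calc extendedHom K T (1 / (F * (1 / F))) ≤ 1 / extendedHom K T (F * (1 / F)) :=
        extendedHom_one_div_le _
    _ = 1 / (G * (1 / G)) := by rw [map_mul, hinv]
    _ ≤ 1 := isVDomain_iff.mp hT G hG (fg_extendedHom hFG)

end FractionalIdeal

end Extension

theorem vDomain_of_inter_localizations_general {ι : Type*} (P : ι → Ideal D)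
    (hP : ∀ i, (P i).IsPrime) (T : ι → Subalgebra D K)
    (hloc : ∀ i, IsLocalization (@Ideal.primeCompl D _ (P i) (hP i)) (T i))
    [∀ i, IsFractionRing (T i) K]
    (hv : ∀ i, IsVDomain (T i) K)
    (hint : ⨅ i, T i = ⊥) :
    IsVDomain D K := by
  refine isVDomain_iff.mpr fun F hF hFG x hx ↦ ?_
  have hxT : ∀ i, x ∈ T i := fun i ↦ by
    have := hP i
    have := hloc i
    obtain ⟨t, rfl⟩ := (mem_one_iff _).mp <|
      extendedHom_one_div_mul_one_div_le_one (P i).primeCompl (hv i) hF hFG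
        (mem_extendedHom_of_mem hx)
    exact t.2
  obtain ⟨d, rfl⟩ := Algebra.mem_bot.mp (hint ▸ Algebra.mem_iInf.mpr hxT)
  exact (mem_one_iff _).mpr ⟨d, rfl⟩

/-- If `D = ⋂_{P ∈ Δ} D_P` for a nonempty family `Δ` of primes and each `D_P` is a
`v`-domain, then `D` is a `v`-domain. -/
theorem vDomain_of_inter_localizations {ι : Type*} [Nonempty ι] (P : ι → Ideal D)
    (hP : ∀ i, (P i).IsPrime) (T : ι → Subalgebra D K)
    (hloc : ∀ i, IsLocalization (@Ideal.primeCompl D _ (P i) (hP i)) (T i))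
    [∀ i, IsFractionRing (T i) K]
    (hv : ∀ i, IsVDomain (T i) K)
    (hint : ⨅ i, T i = ⊥) :
    IsVDomain D K :=
  vDomain_of_inter_localizations_general P hP T hloc hv hint
end

section
/- Let D be an integral domain with quotient field K and X an indeterminate. Suppose that for a nonzero polynomial f ∈ K[X] the content ideal c(f) is v-invertible over D. Then for every nonzero g ∈ K[X], (c(fg))^v = (c(f)·c(g))^v. (Consequence of the Dedekind–Mertens lemma.) -/
open FractionalIdeal

variable {D K : Type*} [CommRing D] [IsDomain D] [Field K] [Algebra D K] [IsFractionRing D K]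

variable (D) in
/-- The content of a polynomial `f ∈ K[X]`, as a fractional ideal of `D`. -/
noncomputable def contentFI (f : Polynomial K) : FractionalIdeal (nonZeroDivisors D) K :=
  FractionalIdeal.spanFinset D (Finset.range (f.natDegree + 1)) f.coeff

/-!
Dedekind–Mertens gives `c(f)^(m+1) c(g) ⊆ c(f)^m c(fg)` for `m = deg g`. Multiplying by
`(c(f)⁻¹)^m` turns this into `C^m c(f) c(g) ⊆ C^m c(fg)` with `C = c(f) c(f)⁻¹`. Since
`C⁻¹ = (C^v)⁻¹ = D`, multiplying by powers of `C` does not change `v`-closures, so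
`(c(f) c(g))^v ⊆ c(fg)^v`; the reverse inclusion comes from `c(fg) ⊆ c(f) c(g)`.

Dedekind–Mertens itself is proved by induction on `m`, splitting off the top coefficient `b` of
`g`; the new term `b c(f)^(m+2)` is handled by a descending induction over the coefficients of `f`.
-/

theorem Submodule.mul_mem_div_of_mem_sup_div {R S : Type*} [CommSemiring R] [CommSemiring S]
    [Algebra R S] {A M P : Submodule R S} {a b s : S} (ha : a ∈ A) (hba : b * a ∈ A * M / P)
    (hs : s ∈ (M ⊔ (R ∙ b) * P) / P) : s * a ∈ A * M / P := by
  refine mem_div_iff_forall_mul_mem.2 fun x hx => ?_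
  obtain ⟨y, hy, z, hz, hyz⟩ := mem_sup.1 (mem_div_iff_forall_mul_mem.1 hs x hx)
  obtain ⟨w, hw, rfl⟩ := mem_span_singleton_mul.1 hz
  have hsplit : s * a * x = a * y + b * a * w := by
    rw [mul_right_comm, ← hyz]
    ring
  rw [hsplit]
  exact add_mem (mul_mem_mul ha hy) (mem_div_iff_forall_mul_mem.1 hba w hw)

namespace Polynomial

open Submodule

theorem coeff_mul_add_eq_sum_range {S : Type*} [CommSemiring S] (f : S[X]) {g : S[X]} {n : ℕ}
    (hg : g.natDegree ≤ n) (i : ℕ) :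
    (f * g).coeff (i + n) = ∑ t ∈ Finset.range (n + 1), g.coeff t * f.coeff (i + n - t) := by
  rw [mul_comm, coeff_mul,
    Finset.Nat.sum_antidiagonal_eq_sum_range_succ (fun t s => g.coeff t * f.coeff s)]
  refine (Finset.sum_subset (Finset.range_subset_range.2 (by omega)) fun t ht hnt => ?_).symm
  simp only [Finset.mem_range] at ht hnt
  rw [coeff_eq_zero_of_natDegree_lt (by omega), zero_mul]

theorem natDegree_erase_le_of_natDegree_le_succ {S : Type*} [Semiring S] {g : S[X]} {n : ℕ}
    (hg : g.natDegree ≤ n + 1) : (g.erase (n + 1)).natDegree ≤ n :=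
  natDegree_le_iff_coeff_eq_zero.2 fun t ht => by
    rw [coeff_erase]
    split_ifs
    · rfl
    · exact coeff_eq_zero_of_natDegree_lt (by omega)

variable {R S : Type*} [CommRing R] [CommRing S] [Algebra R S]

variable (R) in
noncomputable def contentSubmodule (p : S[X]) : Submodule R S :=
  span R (Set.range p.coeff)

theorem coeff_mem_contentSubmodule (p : S[X]) (n : ℕ) : p.coeff n ∈ p.contentSubmodule R :=
  subset_span ⟨n, rfl⟩

theorem contentSubmodule_le_iff {p : S[X]} {N : Submodule R S} :
    p.contentSubmodule R ≤ N ↔ ∀ n, p.coeff n ∈ N := by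
  rw [contentSubmodule, span_le, Set.range_subset_iff]
  rfl

theorem contentSubmodule_add_le (p q : S[X]) :
    (p + q).contentSubmodule R ≤ p.contentSubmodule R ⊔ q.contentSubmodule R :=
  contentSubmodule_le_iff.2 fun n => by
    rw [coeff_add]
    exact add_mem_sup (coeff_mem_contentSubmodule p n) (coeff_mem_contentSubmodule q n)

theorem contentSubmodule_sub_le (p q : S[X]) :
    (p - q).contentSubmodule R ≤ p.contentSubmodule R ⊔ q.contentSubmodule R :=
  contentSubmodule_le_iff.2 fun n => by
    rw [coeff_sub, sub_eq_add_neg]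
    exact add_mem_sup (coeff_mem_contentSubmodule p n) (neg_mem (coeff_mem_contentSubmodule q n))

theorem contentSubmodule_mul_le (p q : S[X]) :
    (p * q).contentSubmodule R ≤ p.contentSubmodule R * q.contentSubmodule R :=
  contentSubmodule_le_iff.2 fun n => by
    rw [coeff_mul]
    exact sum_mem fun x _ =>
      mul_mem_mul (coeff_mem_contentSubmodule p x.1) (coeff_mem_contentSubmodule q x.2)

theorem contentSubmodule_monomial_le (n : ℕ) (b : S) :
    (monomial n b).contentSubmodule R ≤ R ∙ b :=
  contentSubmodule_le_iff.2 fun k => by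
    rw [coeff_monomial]
    split_ifs
    · exact mem_span_singleton_self b
    · exact zero_mem _

theorem contentSubmodule_C_mul (b : S) (p : S[X]) :
    (C b * p).contentSubmodule R = (R ∙ b) * p.contentSubmodule R := by
  rw [contentSubmodule, contentSubmodule, span_mul_span, Set.singleton_mul, ← Set.range_comp]
  congr 2
  funext n
  exact coeff_C_mul p

-- The inductive step of Dedekind–Mertens for the top coefficient `b = g_{m+1}`; `hlow` is what
-- the induction hypothesis yields for `g.erase (m + 1)`.
theorem span_coeff_mul_contentSubmodule_pow_le (f : S[X]) {g : S[X]} {m : ℕ}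
    (hg : g.natDegree ≤ m + 1)
    (hlow : f.contentSubmodule R ^ (m + 1) * (g.erase (m + 1)).contentSubmodule R ≤
      f.contentSubmodule R ^ m * (f * g).contentSubmodule R ⊔
        (R ∙ g.coeff (m + 1)) * f.contentSubmodule R ^ (m + 1)) :
    (R ∙ g.coeff (m + 1)) * f.contentSubmodule R ^ (m + 2) ≤
      f.contentSubmodule R ^ (m + 1) * (f * g).contentSubmodule R := by
  set A := f.contentSubmodule R with hA
  set b := g.coeff (m + 1)
  set P := A ^ (m + 1)
  set M := A ^ m * (f * g).contentSubmodule R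
  have hN : P * (f * g).contentSubmodule R = A * M := by
    simp only [P, M]
    rw [pow_succ', mul_assoc]
  have hlow_coeff (t : ℕ) (ht : t ≤ m) : g.coeff t ∈ (M ⊔ (R ∙ b) * P) / P := by
    have herase : (g.erase (m + 1)).coeff t = g.coeff t := by
      rw [coeff_erase, if_neg (by omega)]
    rw [← herase]
    exact le_div_iff_mul_le.2 (by rwa [mul_comm]) (coeff_mem_contentSubmodule _ t)
  have hfg : (f * g).contentSubmodule R ≤ A * M / P :=
    le_div_iff_mul_le.2 (by rw [mul_comm, hN])
  -- `b * f_i = (f * g)_{i+m+1} - ∑_{t ≤ m} g_t * f_{i+m+1-t}` only involves `f_j` with `j > i`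
  have hcoeff (i : ℕ) : b * f.coeff i ∈ A * M / P := by
    induction i using Nat.strong_decreasing_induction with
    | base => exact ⟨f.natDegree, fun i hi => by simp [coeff_eq_zero_of_natDegree_lt hi]⟩
    | step i ih =>
      have hsum := coeff_mul_add_eq_sum_range f hg i
      rw [Finset.sum_range_succ, Nat.add_sub_cancel] at hsum
      rw [eq_sub_of_add_eq' hsum.symm]
      refine sub_mem (hfg (coeff_mem_contentSubmodule _ _)) (sum_mem fun t ht => ?_)
      have ht : t ≤ m := Nat.lt_succ_iff.1 (Finset.mem_range.1 ht)
      exact mul_mem_div_of_mem_sup_div (coeff_mem_contentSubmodule f _) (ih _ (by omega))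
        (hlow_coeff t ht)
  have hbA : (R ∙ b) * A ≤ A * M / P := by
    rw [hA, contentSubmodule, span_mul_span, span_le, Set.singleton_mul, ← Set.range_comp,
      Set.range_subset_iff]
    exact hcoeff
  rw [pow_succ', ← mul_assoc, hN]
  exact le_div_iff_mul_le.1 hbA

theorem contentSubmodule_pow_succ_mul_le (f : S[X]) {g : S[X]} {m : ℕ} (hg : g.natDegree ≤ m) :
    f.contentSubmodule R ^ (m + 1) * g.contentSubmodule R ≤
      f.contentSubmodule R ^ m * (f * g).contentSubmodule R := by
  induction m generalizing g with
  | zero =>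
    rw [eq_C_of_natDegree_le_zero hg, pow_one, pow_zero, one_mul, mul_comm f,
      contentSubmodule_C_mul, mul_comm]
    gcongr
    exact contentSubmodule_monomial_le 0 _
  | succ m ih =>
    set A := f.contentSubmodule R
    set b := g.coeff (m + 1)
    set g₁ := g.erase (m + 1)
    have hsplit : g.contentSubmodule R ≤ g₁.contentSubmodule R ⊔ (R ∙ b) := by
      conv_lhs => rw [← monomial_add_erase g (m + 1), add_comm]
      exact (contentSubmodule_add_le _ _).trans
        (sup_le_sup_left (contentSubmodule_monomial_le _ _) _)
    have hfg₁ :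
        (f * g₁).contentSubmodule R ≤ (f * g).contentSubmodule R ⊔ (R ∙ b) * A := by
      have : f * g₁ = f * g - monomial (m + 1) b * f := by
        conv_rhs => rw [← monomial_add_erase g (m + 1)]
        ring
      rw [this]
      refine (contentSubmodule_sub_le _ _).trans (sup_le_sup_left ?_ _)
      exact (contentSubmodule_mul_le _ _).trans
        (mul_le_mul_left (contentSubmodule_monomial_le _ _) _)
    have hlow : A ^ (m + 1) * g₁.contentSubmodule R ≤
        A ^ m * (f * g).contentSubmodule R ⊔ (R ∙ b) * A ^ (m + 1) :=
      calc A ^ (m + 1) * g₁.contentSubmodule R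
          ≤ A ^ m * (f * g₁).contentSubmodule R :=
            ih (natDegree_erase_le_of_natDegree_le_succ hg)
        _ ≤ A ^ m * ((f * g).contentSubmodule R ⊔ (R ∙ b) * A) := by gcongr
        _ = A ^ m * (f * g).contentSubmodule R ⊔ (R ∙ b) * A ^ (m + 1) := by
          simp only [← Submodule.add_eq_sup]
          ring
    calc A ^ (m + 1 + 1) * g.contentSubmodule R
        ≤ A ^ (m + 2) * (g₁.contentSubmodule R ⊔ (R ∙ b)) := by gcongr
      _ = A * (A ^ (m + 1) * g₁.contentSubmodule R) ⊔ (R ∙ b) * A ^ (m + 2) := by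
          simp only [← Submodule.add_eq_sup]
          ring
      _ ≤ A * (A ^ m * (f * g).contentSubmodule R ⊔ (R ∙ b) * A ^ (m + 1)) ⊔
            (R ∙ b) * A ^ (m + 2) := by gcongr
      _ = A ^ (m + 1) * (f * g).contentSubmodule R ⊔ (R ∙ b) * A ^ (m + 2) ⊔
            (R ∙ b) * A ^ (m + 2) := by
          simp only [← Submodule.add_eq_sup]
          ring
      _ ≤ A ^ (m + 1) * (f * g).contentSubmodule R := by
          have hkey := span_coeff_mul_contentSubmodule_pow_le f hg hlow
          exact sup_le (sup_le le_rfl hkey) hkey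

end Polynomial

open scoped nonZeroDivisors

namespace FractionalIdeal

instance : NoZeroDivisors (FractionalIdeal D⁰ K) where
  eq_zero_or_eq_zero_of_mul_eq_zero {I J} h := by
    simpa only [← coeToSubmodule_inj, coe_mul, coe_zero, Submodule.zero_eq_bot,
      Submodule.mul_eq_bot] using h

theorem zero_div (J : FractionalIdeal D⁰ K) : 0 / J = 0 := by
  by_cases hJ : J = 0
  · rw [hJ, div_zero]
  · have h : 0 / J * J ≤ 0 := (le_div_iff_mul_le hJ).1 le_rfl
    exact (mul_eq_zero.1 (le_antisymm h (zero_le _))).resolve_right hJ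

theorem div_div (I J L : FractionalIdeal D⁰ K) : I / J / L = I / (J * L) := by
  by_cases hL : L = 0
  · rw [hL, mul_zero, div_zero, div_zero]
  by_cases hJ : J = 0
  · rw [hJ, zero_mul, div_zero, FractionalIdeal.zero_div]
  refine eq_of_forall_le_iff fun N => ?_
  rw [le_div_iff_mul_le hL, le_div_iff_mul_le hJ, le_div_iff_mul_le (mul_ne_zero hJ hL),
    mul_right_comm, mul_assoc]

theorem one_div_ne_zero {I : FractionalIdeal D⁰ K} (hI : I ≠ 0) : 1 / I ≠ 0 := fun h => by
  have hden := den_mem_inv hI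
  rw [inv_eq, h, mem_zero_iff] at hden
  exact IsFractionRing.to_map_ne_zero_of_mem_nonZeroDivisors I.den.2 hden

end FractionalIdeal

theorem le_vop (I : FractionalIdeal D⁰ K) : I ≤ vop I := by
  by_cases hI : I = 0
  · exact hI ▸ zero_le _
  rw [vop, le_div_iff_mul_le (one_div_ne_zero hI)]
  exact mul_one_div_le_one

theorem vop_mono {I J : FractionalIdeal D⁰ K} (h : I ≤ J) : vop I ≤ vop J := by
  by_cases hI : I = 0
  · simp [hI, vop]
  have hJ : J ≠ 0 := ne_bot_of_le_ne_bot hI h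
  exact inv_anti_mono (one_div_ne_zero hJ) (one_div_ne_zero hI) (inv_anti_mono hI hJ h)

theorem one_div_vop (I : FractionalIdeal D⁰ K) : 1 / vop I = 1 / I := by
  by_cases hI : I = 0
  · simp [hI, vop]
  exact le_antisymm (inv_anti_mono hI (ne_bot_of_le_ne_bot hI (le_vop I)) (le_vop I))
    (le_vop (1 / I))

theorem one_div_eq_one_of_vop_eq_one {I : FractionalIdeal D⁰ K} (h : vop I = 1) : 1 / I = 1 := by
  rw [← one_div_vop, h, FractionalIdeal.div_one]

theorem vop_pow_mul_of_one_div_eq_one {C : FractionalIdeal D⁰ K} (hC : 1 / C = 1) (n : ℕ)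
    (X : FractionalIdeal D⁰ K) : vop (C ^ n * X) = vop X := by
  induction n with
  | zero => rw [pow_zero, one_mul]
  | succ n ih => rw [pow_succ', mul_assoc, vop, ← FractionalIdeal.div_div, hC, ← vop, ih]

open scoped Polynomial

section

omit [IsDomain D]
variable (D)

theorem coe_contentFI (p : K[X]) : (contentFI D p : Submodule D K) = p.contentSubmodule D := by
  rw [contentFI, spanFinset_coe]
  refine le_antisymm (Submodule.span_le.2 ?_) (Polynomial.contentSubmodule_le_iff.2 fun i => ?_)
  · rintro _ ⟨i, -, rfl⟩
    exact p.coeff_mem_contentSubmodule i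
  · by_cases hi : i ≤ p.natDegree
    · exact Submodule.subset_span ⟨i, Finset.mem_range.2 (by omega), rfl⟩
    · rw [Polynomial.coeff_eq_zero_of_natDegree_lt (by omega)]
      exact zero_mem _

theorem contentFI_mul_le (p q : K[X]) : contentFI D (p * q) ≤ contentFI D p * contentFI D q := by
  rw [← coe_le_coe, coe_mul, coe_contentFI D, coe_contentFI D, coe_contentFI D]
  exact Polynomial.contentSubmodule_mul_le p q

theorem contentFI_pow_succ_mul_le (p q : K[X]) :
    contentFI D p ^ (q.natDegree + 1) * contentFI D q ≤
      contentFI D p ^ q.natDegree * contentFI D (p * q) := by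
  rw [← coe_le_coe, coe_mul, coe_mul, coe_pow, coe_pow, coe_contentFI D, coe_contentFI D,
    coe_contentFI D]
  exact p.contentSubmodule_pow_succ_mul_le le_rfl

end

theorem content_mul_v_eq_of_vInvertible_general (f : Polynomial K)
    (hinv : IsVInvertible (contentFI D f)) :
    ∀ g : Polynomial K, g ≠ 0 →
      vop (contentFI D (f * g)) = vop (contentFI D f * contentFI D g) := by
  intro g _
  set A := contentFI D f
  set m := g.natDegree
  have hC : 1 / (A * (1 / A)) = 1 := one_div_eq_one_of_vop_eq_one hinv
  have hDM : (A * (1 / A)) ^ m * (A * contentFI D g) ≤ (A * (1 / A)) ^ m * contentFI D (f * g) :=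
    calc _ = (1 / A) ^ m * (A ^ (m + 1) * contentFI D g) := by ring
      _ ≤ (1 / A) ^ m * (A ^ m * contentFI D (f * g)) :=
          mul_right_mono (contentFI_pow_succ_mul_le D f g)
      _ = _ := by ring
  refine le_antisymm (vop_mono (contentFI_mul_le D f g)) ?_
  calc vop (A * contentFI D g)
      = vop ((A * (1 / A)) ^ m * (A * contentFI D g)) :=
        (vop_pow_mul_of_one_div_eq_one hC m _).symm
    _ ≤ vop ((A * (1 / A)) ^ m * contentFI D (f * g)) := vop_mono hDM
    _ = vop (contentFI D (f * g)) := vop_pow_mul_of_one_div_eq_one hC m _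

/-- If `c(f)` is `v`-invertible, then `(c(fg))^v = (c(f)·c(g))^v` for every nonzero `g`. -/
theorem content_mul_v_eq_of_vInvertible (f : Polynomial K) (hf : f ≠ 0)
    (hinv : IsVInvertible (contentFI D f)) :
    ∀ g : Polynomial K, g ≠ 0 →
      vop (contentFI D (f * g)) = vop (contentFI D f * contentFI D g) :=
  content_mul_v_eq_of_vInvertible_general f hinv
end

section
/- Let D be a v-domain. If A and B are v-invertible nonzero fractional ideals of D, then A + B is v-invertible. Conversely, if D is an integral domain in which the sum of any two v-invertible fractional ideals is v-invertible, then D is a v-domain (since principal fractional ideals are v-invertible and every finitely generated fractional ideal is a finite sum of principal ones). -/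
/-!
Write `C = A + B`. Since `(A ⊓ B)(A + B) ⊆ AB`, the ideal `(A ⊓ B) A⁻¹ B⁻¹` lies in `C⁻¹`.
For `a ∈ A`, `b ∈ B`, the two-generated ideal `J = (a, b)` satisfies `ab J⁻¹ ⊆ A ⊓ B`, so if
`x C C⁻¹ ⊆ D` then `x ab A⁻¹ B⁻¹ · J J⁻¹ ⊆ x C (A ⊓ B) A⁻¹ B⁻¹ ⊆ D`. In a `v`-domain `J` is
`v`-invertible, which cancels `J J⁻¹`; letting `a, b` vary gives `x · AA⁻¹ · BB⁻¹ ⊆ D`, and the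
`v`-invertibility of `A` and `B` cancels the rest, leaving `x ∈ D`. Thus `(CC⁻¹)⁻¹ = D`.

Conversely, principal fractional ideals are `v`-invertible and a finitely generated one is a
finite sum of principal ones.
-/

open FractionalIdeal

variable {D K : Type*} [CommRing D] [IsDomain D] [Field K] [Algebra D K] [IsFractionRing D K]

open scoped nonZeroDivisors

namespace FractionalIdeal

section CommRing

variable {R : Type*} [CommRing R] {S : Submonoid R} {P : Type*} [CommRing P] [Algebra R P]
  {A B X M : FractionalIdeal S P}

theorem mul_le_of_forall_spanSingleton_mul_le [IsLocalization S P]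
    (h : ∀ a ∈ A, ∀ b ∈ B, spanSingleton S (a * b) * X ≤ M) : A * B * X ≤ M := by
  refine mul_le.mpr fun y hy x hx => ?_
  refine FractionalIdeal.mul_induction_on hy (fun a ha b hb => ?_) (fun y z hy hz => ?_)
  · exact h a ha b hb (mul_mem_mul (mem_spanSingleton_self _ _) hx)
  · rw [add_mul]
    exact Submodule.add_mem (M : Submodule R P) hy hz

theorem inf_mul_add_le_mul : (A ⊓ B) * (A + B) ≤ A * B := by
  rw [mul_add]
  refine sup_le ?_ ?_
  · calc (A ⊓ B) * A ≤ B * A := by gcongr; exact inf_le_right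
      _ = A * B := mul_comm B A
  · calc (A ⊓ B) * B ≤ A * B := by gcongr; exact inf_le_left

end CommRing

theorem spanFinset_cons {R L ι : Type*} [CommRing R] [Field L] [Algebra R L] [IsFractionRing R L]
    (i : ι) (s : Finset ι) (hi : i ∉ s) (f : ι → L) :
    spanFinset R (s.cons i hi) f = spanSingleton R⁰ (f i) + spanFinset R s f := by
  apply coeToSubmodule_injective
  simp only [spanFinset_coe, Finset.coe_cons, Set.image_insert_eq, Submodule.span_insert, coe_add,
    coe_spanSingleton, Submodule.add_eq_sup]

variable {A B I J : FractionalIdeal D⁰ K}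

theorem mul_inv_ne_zero (hI : I ≠ 0) : I * I⁻¹ ≠ 0 :=
  (bot_lt_mul_inv hI).ne'

theorem le_inv_inv (I : FractionalIdeal D⁰ K) : I ≤ I⁻¹⁻¹ := by
  rcases eq_or_ne I 0 with rfl | hI
  · exact FractionalIdeal.zero_le _
  · exact (le_div_iff_mul_le (right_ne_zero_of_mul (mul_inv_ne_zero hI))).mpr mul_one_div_le_one

theorem inv_inv_inv (I : FractionalIdeal D⁰ K) : I⁻¹⁻¹⁻¹ = I⁻¹ := by
  rcases eq_or_ne I 0 with rfl | hI
  · simp only [inv_zero' K]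
  · have hI' : I⁻¹ ≠ 0 := right_ne_zero_of_mul (mul_inv_ne_zero hI)
    exact le_antisymm (inv_anti_mono hI (right_ne_zero_of_mul (mul_inv_ne_zero hI')) (le_inv_inv I))
      (le_inv_inv I⁻¹)

theorem inf_mul_inv_mul_inv_le_inv_add (hAB : A + B ≠ 0) : (A ⊓ B) * A⁻¹ * B⁻¹ ≤ (A + B)⁻¹ := by
  refine (le_div_iff_mul_le hAB).mpr ?_
  calc (A ⊓ B) * A⁻¹ * B⁻¹ * (A + B) = (A ⊓ B) * (A + B) * (A⁻¹ * B⁻¹) := by ring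
    _ ≤ A * B * (A⁻¹ * B⁻¹) := by gcongr ?_ * _; exact inf_mul_add_le_mul
    _ = (A * A⁻¹) * (B * B⁻¹) := by ring
    _ ≤ 1 * 1 := by gcongr <;> exact mul_one_div_le_one
    _ = 1 := one_mul 1

theorem spanSingleton_mul_mul_inv_le {a b : K} (ha : a ∈ A) (hb : spanSingleton D⁰ b ≤ J) :
    spanSingleton D⁰ (a * b) * J⁻¹ ≤ A :=
  calc spanSingleton D⁰ (a * b) * J⁻¹ = spanSingleton D⁰ a * (spanSingleton D⁰ b * J⁻¹) := by
        rw [← spanSingleton_mul_spanSingleton, mul_assoc]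
    _ ≤ spanSingleton D⁰ a * (J * J⁻¹) := by gcongr
    _ ≤ spanSingleton D⁰ a * 1 := by gcongr; exact mul_one_div_le_one
    _ ≤ A := by rwa [mul_one, spanSingleton_le_iff_mem]

theorem spanSingleton_mul_mul_inv_add_le_inf {a b : K} (ha : a ∈ A) (hb : b ∈ B) :
    spanSingleton D⁰ (a * b) * (spanSingleton D⁰ a + spanSingleton D⁰ b)⁻¹ ≤ A ⊓ B :=
  le_inf (spanSingleton_mul_mul_inv_le ha le_sup_right)
    (mul_comm a b ▸ spanSingleton_mul_mul_inv_le hb le_sup_left)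

end FractionalIdeal

section IsVInvertible

variable {A B X : FractionalIdeal D⁰ K}

theorem isVInvertible_iff : IsVInvertible A ↔ (A * A⁻¹)⁻¹ = 1 := by
  change (A * A⁻¹)⁻¹⁻¹ = 1 ↔ _
  constructor
  · intro h
    rw [← inv_inv_inv, h, inv_one]
  · intro h
    rw [h, inv_one]

theorem IsVInvertible.mul_inv_ne_zero (hA : IsVInvertible A) : A * A⁻¹ ≠ 0 := by
  intro h
  rw [isVInvertible_iff, h, inv_zero' K] at hA
  exact zero_ne_one hA

theorem IsVInvertible.ne_zero (hA : IsVInvertible A) : A ≠ 0 := by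
  rintro rfl
  exact hA.mul_inv_ne_zero (zero_mul _)

theorem IsVInvertible.le_one_of_mul_le_one (hA : IsVInvertible A) (h : X * (A * A⁻¹) ≤ 1) :
    X ≤ 1 :=
  isVInvertible_iff.mp hA ▸ (le_div_iff_mul_le hA.mul_inv_ne_zero).mpr h

theorem isVInvertible_of_forall_le_one (hA : A ≠ 0)
    (h : ∀ X : FractionalIdeal D⁰ K, X * (A * A⁻¹) ≤ 1 → X ≤ 1) : IsVInvertible A := by
  refine isVInvertible_iff.mpr (le_antisymm (h _ ?_) ?_)
  · rw [mul_comm]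
    exact mul_one_div_le_one
  · refine (le_div_iff_mul_le (mul_inv_ne_zero hA)).mpr ?_
    rw [one_mul]
    exact mul_one_div_le_one

theorem isVInvertible_spanSingleton {x : K} (hx : x ≠ 0) :
    IsVInvertible (spanSingleton D⁰ x) :=
  isVInvertible_iff.mpr (by rw [spanSingleton_mul_inv K hx, inv_one])

theorem isVInvertible_add (hA : IsVInvertible A) (hB : IsVInvertible B)
    (hpair : ∀ a ∈ A, ∀ b ∈ B, a ≠ 0 →
      IsVInvertible (spanSingleton D⁰ a + spanSingleton D⁰ b)) :
    IsVInvertible (A + B) := by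
  have hAB : A + B ≠ 0 := fun h => hA.ne_zero (FractionalIdeal.le_zero_iff.mp (h ▸ le_self_add))
  refine isVInvertible_of_forall_le_one hAB fun X hX => ?_
  refine hB.le_one_of_mul_le_one (hA.le_one_of_mul_le_one ?_)
  calc X * (B * B⁻¹) * (A * A⁻¹) = A * B * (X * A⁻¹ * B⁻¹) := by ring
    _ ≤ 1 := mul_le_of_forall_spanSingleton_mul_le fun a ha b hb => ?_
  rcases eq_or_ne a 0 with rfl | ha0
  · simp only [zero_mul, spanSingleton_zero, FractionalIdeal.zero_le]
  set J := spanSingleton D⁰ a + spanSingleton D⁰ b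
  refine (hpair a ha b hb ha0).le_one_of_mul_le_one ?_
  have hJ : J ≤ A + B := add_le_add (spanSingleton_le_iff_mem.mpr ha)
    (spanSingleton_le_iff_mem.mpr hb)
  calc spanSingleton D⁰ (a * b) * (X * A⁻¹ * B⁻¹) * (J * J⁻¹)
        = X * J * (spanSingleton D⁰ (a * b) * J⁻¹ * A⁻¹ * B⁻¹) := by ring
    _ ≤ X * (A + B) * ((A ⊓ B) * A⁻¹ * B⁻¹) := by
        gcongr; exact spanSingleton_mul_mul_inv_add_le_inf ha hb
    _ ≤ X * (A + B) * (A + B)⁻¹ := by gcongr; exact inf_mul_inv_mul_inv_le_inv_add hAB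
    _ ≤ 1 := by rwa [mul_assoc]

theorem isVInvertible_spanFinset
    (hsum : ∀ A B : FractionalIdeal D⁰ K, IsVInvertible A → IsVInvertible B →
      IsVInvertible (A + B))
    {ι : Type*} (s : Finset ι) (f : ι → K) (hs : spanFinset D s f ≠ 0) :
    IsVInvertible (spanFinset D s f) := by
  induction s using Finset.cons_induction with
  | empty => simp at hs
  | cons i s hi ih =>
    rw [spanFinset_cons] at hs ⊢
    rcases eq_or_ne (f i) 0 with hfi | hfi
    · rw [hfi, spanSingleton_zero, zero_add] at hs ⊢
      exact ih hs
    rcases eq_or_ne (spanFinset D s f) 0 with hrest | hrest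
    · rw [hrest, add_zero]
      exact isVInvertible_spanSingleton hfi
    · exact hsum _ _ (isVInvertible_spanSingleton hfi) (ih hrest)

end IsVInvertible

/-- In a `v`-domain, the sum of two `v`-invertible nonzero fractional ideals is
`v`-invertible; conversely, if sums of `v`-invertible fractional ideals are
`v`-invertible, then `D` is a `v`-domain. -/
theorem vDomain_sum_vInvertible :
    ((∀ F : FractionalIdeal (nonZeroDivisors D) K, F ≠ 0 → (F : Submodule D K).FG →
        IsVInvertible F) →
      ∀ A B : FractionalIdeal (nonZeroDivisors D) K, A ≠ 0 → B ≠ 0 →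
        IsVInvertible A → IsVInvertible B → IsVInvertible (A + B)) ∧
    ((∀ A B : FractionalIdeal (nonZeroDivisors D) K,
        IsVInvertible A → IsVInvertible B → IsVInvertible (A + B)) →
      ∀ F : FractionalIdeal (nonZeroDivisors D) K, F ≠ 0 → (F : Submodule D K).FG →
        IsVInvertible F) := by
  constructor
  · intro hv A B _ _ hA hB
    refine isVInvertible_add hA hB fun a _ b _ ha0 => hv _ ?_ ?_
    · exact fun h => ha0 <| spanSingleton_eq_zero_iff.mp <|
        FractionalIdeal.le_zero_iff.mp (h ▸ le_self_add)
    · rw [coe_add, coe_spanSingleton, coe_spanSingleton]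
      exact (Submodule.fg_span_singleton a).sup (Submodule.fg_span_singleton b)
  · rintro hsum F hF ⟨s, hs⟩
    obtain rfl : F = spanFinset D s id := coeToSubmodule_injective (by simp [hs])
    exact isVInvertible_spanFinset hsum s id hF
end
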